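/- Let G = (V, E) be a finite simple graph with V nonempty, and let k ≥ 1 be an integer. Color every vertex of V red, and let G' be the graph obtained from G by adding a set U of k new blue vertices that are incident to no edges. Then the maximum of D_S(G') over all nonempty fair subsets S ⊆ V ∪ U equals one half of the maximum of D_R(G) over all nonempty subsets R ⊆ V with |R| ≤ k. -/

import Mathlib

open scoped Classical in
/-- Density of a vertex subset `S` in a simple graph `G`:
`2·e(S)/|S|`, computed as the sum over ordered pairs of vertices of `S` of the
adjacency indicator, divided by `|S|` (so the empty set has density 0). -/
noncomputable def density {W : Type*} (G : SimpleGraph W) (S : Finset W) : ℝ :=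
  (∑ i ∈ S, ∑ j ∈ S, if G.Adj i j then (1:ℝ) else 0) / S.card

open scoped Classical in
private lemma aux_sum_disjSum {V U : Type*} (G : SimpleGraph V) (L : Finset V)
    (T : Finset U) :
    (∑ i ∈ L.disjSum T, ∑ j ∈ L.disjSum T,
      if (G.map (Function.Embedding.inl : V ↪ V ⊕ U)).Adj i j then (1:ℝ) else 0)
      = ∑ i ∈ L, ∑ j ∈ L, if G.Adj i j then (1:ℝ) else 0 := by
  rw [Finset.sum_disjSum]
  simp only [Finset.sum_disjSum, SimpleGraph.map_adj, Function.Embedding.inl_apply]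
  simp

private lemma aux_filter_left {α β : Type*} (S : Finset (α ⊕ β)) :
    (S.filter (fun a => a.isLeft)).card = S.toLeft.card := by
  classical
  rw [Finset.card_filter]
  conv_lhs => rw [← Finset.toLeft_disjSum_toRight (u := S)]
  rw [Finset.sum_disjSum]
  simp

private lemma aux_filter_right {α β : Type*} (S : Finset (α ⊕ β)) :
    (S.filter (fun a => a.isRight)).card = S.toRight.card := by
  classical
  rw [Finset.card_filter]
  conv_lhs => rw [← Finset.toLeft_disjSum_toRight (u := S)]
  rw [Finset.sum_disjSum]
  simp

open scoped Classical in
/-- If `T` has the same cardinality as `L`, then the density of `L.disjSum T`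
in the graph with added isolated vertices is half the density of `L`. -/
private lemma density_disjSum_eq_half {V U : Type*} (G : SimpleGraph V)
    (L : Finset V) (T : Finset U) (hcard : T.card = L.card) :
    density (G.map (Function.Embedding.inl : V ↪ V ⊕ U)) (L.disjSum T)
      = (1/2) * density G L := by
  unfold density
  rw [show (∑ i ∈ L.disjSum T, ∑ j ∈ L.disjSum T,
      @ite ℝ ((G.map (Function.Embedding.inl : V ↪ V ⊕ U)).Adj i j) (Classical.propDecidable _) 1 0)
      = ∑ i ∈ L, ∑ j ∈ L, if G.Adj i j then (1:ℝ) else 0 from by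
        convert aux_sum_disjSum (U := U) G L T, Finset.card_disjSum, hcard]
  rcases Nat.eq_zero_or_pos L.card with h | h
  · simp [h]
  · have : ((L.card + L.card : ℕ) : ℝ) = 2 * (L.card : ℝ) := by push_cast; ring
    rw [this]
    have hL : (L.card : ℝ) ≠ 0 := by positivity
    field_simp

theorem fair_densest_eq_half_densest_at_most_k
    {V : Type*} [Fintype V] [DecidableEq V] [Nonempty V]
    (G : SimpleGraph V) (k : ℕ) (hk : 1 ≤ k) :
    sSup {x : ℝ | ∃ S : Finset (V ⊕ Fin k), S.Nonempty ∧
        (S.filter (fun a => a.isLeft)).card = (S.filter (fun a => a.isRight)).card ∧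
        x = density (G.map Function.Embedding.inl) S}
      = (1/2) * sSup {x : ℝ | ∃ R : Finset V, R.Nonempty ∧ R.card ≤ k ∧
        x = density G R} := by
  classical
  set A := {x : ℝ | ∃ S : Finset (V ⊕ Fin k), S.Nonempty ∧
      (S.filter (fun a => a.isLeft)).card = (S.filter (fun a => a.isRight)).card ∧
      x = density (G.map Function.Embedding.inl) S} with hA
  set B := {x : ℝ | ∃ R : Finset V, R.Nonempty ∧ R.card ≤ k ∧ x = density G R} with hB
  have hBA : A = (fun x : ℝ => (1/2) * x) '' B := by
    ext x
    constructor
    · rintro ⟨S, hSne, hfair, rfl⟩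
      have hfair' : S.toLeft.card = S.toRight.card := by
        rw [← aux_filter_left, ← aux_filter_right]; exact hfair
      have hLne : S.toLeft.Nonempty := by
        rw [← Finset.card_pos]
        by_contra h
        push_neg at h
        have hL0 : S.toLeft.card = 0 := Nat.lt_one_iff.mp (Nat.lt_succ_of_le h)
        have : S.card = 0 := by
          rw [← Finset.card_toLeft_add_card_toRight, hL0, ← hfair', hL0]
        exact (Finset.card_pos.mpr hSne).ne' this
      have hLk : S.toLeft.card ≤ k := by
        rw [hfair']
        calc S.toRight.card ≤ Fintype.card (Fin k) := Finset.card_le_univ _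
          _ = k := Fintype.card_fin k
      refine ⟨density G S.toLeft, ⟨S.toLeft, hLne, hLk, rfl⟩, ?_⟩
      have := density_disjSum_eq_half G S.toLeft S.toRight hfair'.symm
      rw [Finset.toLeft_disjSum_toRight] at this
      exact this.symm
    · rintro ⟨y, ⟨R, hRne, hRk, rfl⟩, rfl⟩
      obtain ⟨T, -, hT⟩ := Finset.exists_subset_card_eq
        (s := (Finset.univ : Finset (Fin k))) (n := R.card) (by simpa using hRk)
      refine ⟨R.disjSum T, ?_, ?_, ?_⟩
      · obtain ⟨v, hv⟩ := hRne
        exact ⟨Sum.inl v, by simp [hv]⟩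
      · rw [aux_filter_left, aux_filter_right, Finset.toLeft_disjSum,
          Finset.toRight_disjSum, hT]
      · exact (density_disjSum_eq_half G R T hT).symm
  have hBne : B.Nonempty := by
    obtain v := Classical.arbitrary V
    exact ⟨density G {v}, {v}, Finset.singleton_nonempty v, by simpa using hk, rfl⟩
  have hBfin : B.Finite := by
    apply (Set.finite_range fun R : Finset V => density G R).subset
    rintro x ⟨R, -, -, rfl⟩
    exact ⟨R, rfl⟩
  have hmono : Monotone (fun x : ℝ => (1/2) * x) :=
    fun a b h => mul_le_mul_of_nonneg_left h (by norm_num)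
  rw [hBA]
  exact (Monotone.map_csSup_of_continuousAt (f := fun x : ℝ => (1/2) * x)
    (by fun_prop) hmono hBne hBfin.bddAbove).symm
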